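/- arXiv:math/0410300 — 3 statements merged into one kernel-verified Lean document; each statement's English description precedes it below -/
import Mathlib

section
/- Let A and B be graded ℤ[U]-modules of HF⁺-type and let c be an integer. Then there is a constant D such that for every integer k ≥ D, every homogeneous map of degree c defined on the truncation A_{≤k} with values in B extends uniquely to a ℤ[U]-module map of degree c from A to B; that is, for every family of group homomorphisms f_d : A_d → B_{d+c}, defined for d ≤ k and commuting with U, there is a unique family g_d : A_d → B_{d+c}, defined for all d ∈ ℤ and commuting with U, with g_d = f_d for all d ≤ k. -/
/-- A graded `ℤ[U]`-module: a family of abelian groups `M d` (`d ∈ ℤ`) with maps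
`U : M d →+ M (d-2)`. It is of `HF⁺`-type if `U` is eventually an isomorphism in high degrees
and the groups vanish in all sufficiently small degrees. -/
def IsHFPlusType (M : ℤ → Type*) [∀ d, AddCommGroup (M d)]
    (U : ∀ d : ℤ, M d →+ M (d - 2)) : Prop :=
  (∃ N : ℤ, ∀ d : ℤ, N ≤ d → Function.Bijective (U d)) ∧
  (∃ N₀ : ℤ, ∀ d : ℤ, d ≤ N₀ → ∀ x : M d, x = 0)

/-- Transport along an equality of degrees. -/
def gradedCast (M : ℤ → Type*) [∀ d, AddCommGroup (M d)] {a b : ℤ} (h : a = b) :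
    M a →+ M b where
  toFun x := h ▸ x
  map_zero' := by subst h; rfl
  map_add' := by subst h; intro x y; rfl

lemma gradedCast_self' (M : ℤ → Type*) [∀ d, AddCommGroup (M d)] {a : ℤ} (h : a = a)
    (x : M a) : gradedCast M h x = x := rfl

lemma gradedCast_cast' (M : ℤ → Type*) [∀ d, AddCommGroup (M d)] {a b c : ℤ}
    (h1 : a = b) (h2 : b = c) (x : M a) :
    gradedCast M h2 (gradedCast M h1 x) = gradedCast M (h1.trans h2) x := by
  subst h1; subst h2; rfl

lemma gradedCast_inj' (M : ℤ → Type*) [∀ d, AddCommGroup (M d)] {a b : ℤ} (h : a = b)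
    {x y : M a} (hxy : gradedCast M h x = gradedCast M h y) : x = y := by
  subst h; exact hxy

open Classical in
/-- A total "inverse" of `UB d`, equal to the genuine inverse when `UB d` is bijective. -/
noncomputable def Vmap (B : ℤ → Type*) [∀ d, AddCommGroup (B d)]
    (UB : ∀ d : ℤ, B d →+ B (d - 2)) (d : ℤ) : B (d - 2) →+ B d :=
  if h : Function.Bijective (UB d) then
    ((AddEquiv.ofBijective (UB d) h).symm : B (d-2) ≃+ B d).toAddMonoidHom
  else 0

lemma Vmap_UB (B : ℤ → Type*) [∀ d, AddCommGroup (B d)]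
    (UB : ∀ d : ℤ, B d →+ B (d - 2)) (d : ℤ) (h : Function.Bijective (UB d)) (x : B d) :
    Vmap B UB d (UB d x) = x := by
  simp only [Vmap]
  rw [dif_pos h]
  exact (AddEquiv.ofBijective (UB d) h).symm_apply_apply x

lemma UB_Vmap (B : ℤ → Type*) [∀ d, AddCommGroup (B d)]
    (UB : ∀ d : ℤ, B d →+ B (d - 2)) (d : ℤ) (h : Function.Bijective (UB d)) (y : B (d-2)) :
    UB d (Vmap B UB d y) = y := by
  simp only [Vmap]
  rw [dif_pos h]
  exact (AddEquiv.ofBijective (UB d) h).apply_symm_apply y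

/-- The recursive extension family. -/
noncomputable def Gaux (A B : ℤ → Type*) [∀ d, AddCommGroup (A d)] [∀ d, AddCommGroup (B d)]
    (UA : ∀ d : ℤ, A d →+ A (d - 2)) (UB : ∀ d : ℤ, B d →+ B (d - 2))
    (c k : ℤ) (f : ∀ d : ℤ, d ≤ k → (A d →+ B (d + c))) :
    ℕ → ∀ d : ℤ, A d →+ B (d + c)
  | 0, d => if h : d ≤ k then f d h else 0
  | (n+1), d =>
      if h : d ≤ k then f d h else
        (Vmap B UB (d + c)).comp ((gradedCast B (by ring : (d - 2) + c = (d + c) - 2)).comp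
          ((Gaux A B UA UB c k f n (d - 2)).comp (UA d)))

section

variable (A B : ℤ → Type*) [∀ d, AddCommGroup (A d)] [∀ d, AddCommGroup (B d)]
    (UA : ∀ d : ℤ, A d →+ A (d - 2)) (UB : ∀ d : ℤ, B d →+ B (d - 2))
    (c k : ℤ) (f : ∀ d : ℤ, d ≤ k → (A d →+ B (d + c)))

lemma Gaux_low (n : ℕ) (d : ℤ) (h : d ≤ k) : Gaux A B UA UB c k f n d = f d h := by
  cases n <;> simp [Gaux, h]

lemma Gaux_stab (n : ℕ) : ∀ d : ℤ, (d - k).toNat ≤ n →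
    Gaux A B UA UB c k f (n + 1) d = Gaux A B UA UB c k f n d := by
  induction n with
  | zero =>
    intro d hd
    have h : d ≤ k := by omega
    rw [Gaux_low A B UA UB c k f _ d h, Gaux_low A B UA UB c k f _ d h]
  | succ n ih =>
    intro d hd
    by_cases h : d ≤ k
    · rw [Gaux_low A B UA UB c k f _ d h, Gaux_low A B UA UB c k f _ d h]
    · have h2 : (d - 2 - k).toNat ≤ n := by omega
      show Gaux A B UA UB c k f ((n+1)+1) d = Gaux A B UA UB c k f (n+1) d
      conv_lhs => rw [Gaux]
      conv_rhs => rw [Gaux]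
      rw [dif_neg h, ih (d - 2) h2, dif_neg h]

lemma Gaux_stab' (n m : ℕ) (hnm : n ≤ m) (d : ℤ) (hd : (d - k).toNat ≤ n) :
    Gaux A B UA UB c k f m d = Gaux A B UA UB c k f n d := by
  induction m, hnm using Nat.le_induction with
  | base => rfl
  | succ m hm ih => rw [Gaux_stab A B UA UB c k f m d (le_trans hd hm), ih]

end

/-- Let `A` and `B` be graded `ℤ[U]`-modules of `HF⁺`-type and `c` an integer.  There is a
constant `D` such that for every `k ≥ D`, every homogeneous degree-`c` map defined on the
truncation `A_{≤k}` (a family `f_d : A_d →+ B_{d+c}` for `d ≤ k` commuting with `U`) extends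
uniquely to a degree-`c` `ℤ[U]`-module map `A → B` (a family defined for all `d ∈ ℤ`,
commuting with `U` and agreeing with `f` in degrees `≤ k`). -/
theorem stmt1 (A B : ℤ → Type*) [∀ d, AddCommGroup (A d)] [∀ d, AddCommGroup (B d)]
    (UA : ∀ d : ℤ, A d →+ A (d - 2)) (UB : ∀ d : ℤ, B d →+ B (d - 2))
    (hA : IsHFPlusType A UA) (hB : IsHFPlusType B UB) (c : ℤ) :
    ∃ D : ℤ, ∀ k : ℤ, D ≤ k →
      ∀ f : ∀ d : ℤ, d ≤ k → (A d →+ B (d + c)),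
        (∀ (d : ℤ) (hd : d ≤ k) (x : A d),
            f (d - 2) (by omega) (UA d x) =
              gradedCast B (by ring) (UB (d + c) (f d hd x))) →
        ∃! g : ∀ d : ℤ, A d →+ B (d + c),
          (∀ (d : ℤ) (x : A d),
              g (d - 2) (UA d x) = gradedCast B (by ring) (UB (d + c) (g d x))) ∧
          ∀ (d : ℤ) (hd : d ≤ k), g d = f d hd := by
  obtain ⟨NB, hNB⟩ := hB.1
  refine ⟨NB - c - 1, fun k hk f hf => ?_⟩
  -- for any degree d > k, UB (d + c) is bijective
  have hbij : ∀ d : ℤ, k < d → Function.Bijective (UB (d + c)) := fun d hd =>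
    hNB (d + c) (by omega)
  set g : ∀ d : ℤ, A d →+ B (d + c) := fun d => Gaux A B UA UB c k f (d - k).toNat d with hg
  have g_low : ∀ (d : ℤ) (hd : d ≤ k), g d = f d hd := fun d hd =>
    Gaux_low A B UA UB c k f _ d hd
  have g_step : ∀ d : ℤ, k < d →
      g d = (Vmap B UB (d + c)).comp ((gradedCast B (by ring : (d - 2) + c = (d + c) - 2)).comp
          ((g (d - 2)).comp (UA d))) := by
    intro d hd
    have ht : (d - k).toNat = ((d - k).toNat - 1) + 1 := by omega
    have : g d = Gaux A B UA UB c k f (((d - k).toNat - 1) + 1) d := by rw [hg]; rw [← ht]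
    have hrec : Gaux A B UA UB c k f ((d - k).toNat - 1) (d - 2) = g (d - 2) := by
      rw [hg]
      exact Gaux_stab' A B UA UB c k f ((d - 2 - k).toNat) ((d - k).toNat - 1)
        (by omega) (d - 2) le_rfl
    rw [this, Gaux, dif_neg (by omega : ¬ d ≤ k), hrec]
  have g_rel : ∀ (d : ℤ) (x : A d),
      g (d - 2) (UA d x) = gradedCast B (by ring) (UB (d + c) (g d x)) := by
    intro d x
    by_cases hd : d ≤ k
    · rw [g_low d hd, g_low (d - 2) (by omega)]
      exact hf d hd x
    · rw [g_step d (by omega)]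
      simp only [AddMonoidHom.comp_apply]
      rw [UB_Vmap B UB (d + c) (hbij d (by omega))]
      rw [gradedCast_cast']
      exact (gradedCast_self' B _ _).symm
  refine ⟨g, ⟨g_rel, g_low⟩, ?_⟩
  rintro g' ⟨rel', agree'⟩
  funext d
  -- strong induction on (d - k).toNat
  suffices h : ∀ n : ℕ, ∀ d : ℤ, (d - k).toNat ≤ n → g' d = g d from h (d - k).toNat d le_rfl
  intro n
  induction n with
  | zero =>
    intro d hd
    have h : d ≤ k := by omega
    rw [agree' d h, g_low d h]
  | succ n ih =>
    intro d hd
    by_cases h : d ≤ k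
    · rw [agree' d h, g_low d h]
    · ext x
      have hb := hbij d (by omega)
      apply hb.injective
      apply gradedCast_inj' B (by ring : (d + c) - 2 = (d - 2) + c)
      rw [← rel' d x, ← g_rel d x, ih (d - 2) (by omega)]
end

section
/- For every positive integer n and every integer i, the ℤ[U]-module map D⁺_{n,i} : 𝔸⁺_i → 𝔹⁺_i is surjective. (This is the computation of the mapping-cone complex of the unknot: it shows H_*(Cone(D⁺_{n,i})) is isomorphic to the kernel of D⁺_{n,i}.) -/
/-!
Since `D⁺ x = v_s x + h_s x` for `x` in the summand `T_s`, modulo the image of `D⁺` the element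
`v_s x ∈ T_s` is congruent to `-h_s x ∈ T_{s+n}`. For `s < 0`, `v_s = U^{-s}` is onto and
`h_s = 1`, so every element of `T_s` is congruent to one of `T_{s+n}`; finitely many such steps
reach `s ≥ 0`. For `s ≥ 0`, `v_s = 1` and `h_s = U^s`, so `x ∈ T_s` is congruent to
`-U^s x ∈ T_{s+n}`; from `s ≥ 1` on each step lowers the top degree of `x`, and `U` is locally
nilpotent on `T`, so the process ends at `0`.
-/

noncomputable section

/-- The `ℤ[U]`-module `T = ℤ[U,U⁻¹]/(U·ℤ[U])`, modelled as finitely supported functions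
`ℕ →₀ ℤ`, where the value at `j` is the coefficient of `U^{-j}`. -/
abbrev TT : Type := ℕ →₀ ℤ

/-- The action of `U` on `T` : `U·U^{-j} = U^{-(j-1)}` for `j ≥ 1` and `U·U^0 = 0`. -/
def UT : AddMonoid.End TT :=
  Finsupp.liftAddHom fun j => if j = 0 then 0 else Finsupp.singleAddHom (j - 1)

/-- The map `v_s : T → T`: the identity if `s ≥ 0`, multiplication by `U^{-s}` if `s ≤ 0`. -/
def vT (s : ℤ) : AddMonoid.End TT := if 0 ≤ s then 1 else UT ^ (-s).toNat

/-- The map `h_s : T → T`: multiplication by `U^{s}` if `s ≥ 0`, the identity if `s ≤ 0`. -/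
def hT (s : ℤ) : AddMonoid.End TT := if 0 ≤ s then UT ^ s.toNat else 1

/-- The index set of integers congruent to `i` modulo `n`. -/
def Idx (n i : ℤ) : Type := {s : ℤ // n ∣ s - i}

instance (n i : ℤ) : DecidableEq (Idx n i) := Subtype.instDecidableEq

/-- `𝔸⁺_i = 𝔹⁺_i = ⊕_{s ≡ i (mod n)} T_s`. -/
abbrev ABt (n i : ℤ) : Type := Π₀ _ : Idx n i, TT

/-- Shifting the index by `n`. -/
def idxAdd (n i : ℤ) (s : Idx n i) : Idx n i :=
  ⟨s.1 + n, by obtain ⟨c, hc⟩ := s.2; exact ⟨c + 1, by rw [show s.1 + n - i = s.1 - i + n by ring, hc]; ring⟩⟩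

/-- Shifting the index by `-n`. -/
def idxSub (n i : ℤ) (s : Idx n i) : Idx n i :=
  ⟨s.1 - n, by obtain ⟨c, hc⟩ := s.2; exact ⟨c - 1, by rw [show s.1 - n - i = s.1 - i - n by ring, hc]; ring⟩⟩

/-- The map `D⁺_{n,i} : 𝔸⁺_i → 𝔹⁺_i`, `(D⁺_{n,i} a)_s = v_s(a_s) + h_{s-n}(a_{s-n})`. -/
def Dpos (n i : ℤ) : ABt n i →+ ABt n i :=
  DFinsupp.sumAddHom fun s =>
    ((DFinsupp.singleAddHom (fun _ : Idx n i => TT) s).comp (vT s.1)) +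
    ((DFinsupp.singleAddHom (fun _ : Idx n i => TT) (idxAdd n i s)).comp (hT s.1))

/-- The map `D⁺_{-n,i} : 𝔸⁺_i → 𝔹⁺_i`, `(D⁺_{-n,i} a)_s = v_s(a_s) + h_{s+n}(a_{s+n})`. -/
def Dneg (n i : ℤ) : ABt n i →+ ABt n i :=
  DFinsupp.sumAddHom fun s =>
    ((DFinsupp.singleAddHom (fun _ : Idx n i => TT) s).comp (vT s.1)) +
    ((DFinsupp.singleAddHom (fun _ : Idx n i => TT) (idxSub n i s)).comp (hT s.1))

/-- The `U`-action on `𝔸⁺_i = 𝔹⁺_i`, acting as `U` on each summand. -/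
def UAB (n i : ℤ) : AddMonoid.End (ABt n i) :=
  DFinsupp.sumAddHom fun s => (DFinsupp.singleAddHom (fun _ : Idx n i => TT) s).comp UT

/-- `ε(s,n)` for `n > 0`: writing `s = σ + kn` with `0 ≤ σ < n`,
`ε(s,n) = kσ + k(k-1)n/2` for `k ≥ 0` and `(k+1)σ + k(k+1)n/2` for `k < 0`. -/
def epsZ (s n : ℤ) : ℤ :=
  if 0 ≤ s.ediv n then
    s.ediv n * s.emod n + (s.ediv n * (s.ediv n - 1)).ediv 2 * n
  else
    (s.ediv n + 1) * s.emod n + (s.ediv n * (s.ediv n + 1)).ediv 2 * n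

lemma UT_single (j : ℕ) (m : ℤ) :
    UT (Finsupp.single j m) = if j = 0 then 0 else Finsupp.single (j - 1) m := by
  change Finsupp.liftAddHom (fun j : ℕ => if j = 0 then (0 : ℤ →+ TT) else
    Finsupp.singleAddHom (j - 1)) (Finsupp.single j m) = _
  rw [Finsupp.liftAddHom_apply_single]
  split <;> simp

lemma UT_apply (t : TT) (j : ℕ) : UT t j = t (j + 1) := by
  induction t using Finsupp.induction_linear with
  | zero => simp
  | add f g hf hg => simp [hf, hg]
  | single k m =>
    rw [UT_single]
    split_ifs with hk
    · simp [hk]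
    · simp only [Finsupp.single_apply]
      grind

lemma UT_pow_apply (k : ℕ) (t : TT) (j : ℕ) : (UT ^ k) t j = t (j + k) := by
  induction k generalizing t with
  | zero => rfl
  | succ k ih =>
    rw [pow_succ]
    change (UT ^ k) (UT t) j = _
    rw [ih, UT_apply, add_assoc]

lemma UT_surjective : Function.Surjective UT := fun t =>
  ⟨Finsupp.mapDomain (· + 1) t, Finsupp.ext fun j => by
    rw [UT_apply, Finsupp.mapDomain_apply (add_left_injective 1)]⟩

lemma UT_pow_surjective (k : ℕ) : Function.Surjective (UT ^ k) := by
  rw [AddMonoid.End.coe_pow]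
  exact UT_surjective.iterate k

lemma TT.exists_forall_ge_apply_eq_zero (t : TT) : ∃ N, ∀ j, N ≤ j → t j = 0 := by
  obtain ⟨N, hN⟩ := t.support.exists_nat_subset_range
  refine ⟨N, fun j hj => Finsupp.notMem_support_iff.mp fun hmem => ?_⟩
  have := Finset.mem_range.mp (hN hmem)
  omega

section Dpos

variable {n i : ℤ}

@[simp]
lemma idxAdd_val (s : Idx n i) : (idxAdd n i s).1 = s.1 + n := rfl

lemma Dpos_single (s : Idx n i) (a : TT) :
    Dpos n i (DFinsupp.single s a) =
      DFinsupp.single s (vT s.1 a) + DFinsupp.single (idxAdd n i s) (hT s.1 a) := by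
  rw [Dpos, DFinsupp.sumAddHom_single]
  rfl

lemma single_vT_mem_range (s : Idx n i) {a : TT}
    (h : DFinsupp.single (idxAdd n i s) (hT s.1 a) ∈ (Dpos n i).range) :
    DFinsupp.single s (vT s.1 a) ∈ (Dpos n i).range := by
  have := sub_mem (AddMonoidHom.mem_range.mpr ⟨_, Dpos_single s a⟩) h
  rwa [add_sub_cancel_right] at this

lemma single_mem_range_of_one_le (hn : 0 < n) (N : ℕ) (s : Idx n i) (t : TT) (hs : 1 ≤ s.1)
    (ht : ∀ j, N ≤ j → t j = 0) : DFinsupp.single s t ∈ (Dpos n i).range := by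
  induction N generalizing s t with
  | zero =>
    obtain rfl : t = 0 := Finsupp.ext fun j => ht j j.zero_le
    rw [DFinsupp.single_zero]
    exact zero_mem _
  | succ N ih =>
    have hv : vT s.1 = 1 := if_pos (by omega)
    have hh : hT s.1 = UT ^ s.1.toNat := if_pos (by omega)
    simpa [hv] using single_vT_mem_range s (a := t) <| by
      refine ih _ _ (by simp; omega) fun j hj => ?_
      rw [hh, UT_pow_apply]
      exact ht _ (by omega)

lemma single_mem_range_of_nonneg (hn : 0 < n) (s : Idx n i) (t : TT) (hs : 0 ≤ s.1) :
    DFinsupp.single s t ∈ (Dpos n i).range := by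
  obtain ⟨N, hN⟩ := t.exists_forall_ge_apply_eq_zero
  rcases hs.eq_or_lt with hs0 | hs1
  · have hv : vT s.1 = 1 := if_pos hs
    have hh : hT s.1 = 1 := by rw [hT, if_pos hs, ← hs0]; rfl
    simpa [hv] using single_vT_mem_range s (a := t) <| by
      rw [hh]
      exact single_mem_range_of_one_le hn N _ t (by simp; omega) hN
  · exact single_mem_range_of_one_le hn N s t hs1 hN

lemma single_mem_range_of_neg_le (hn : 0 < n) (k : ℕ) (s : Idx n i) (t : TT)
    (hs : -(k : ℤ) ≤ s.1) :
    DFinsupp.single s t ∈ (Dpos n i).range := by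
  induction k generalizing s t with
  | zero => exact single_mem_range_of_nonneg hn s t (by simpa using hs)
  | succ k ih =>
    rcases le_or_gt (-(k : ℤ)) s.1 with hsk | hsk
    · exact ih s t hsk
    have hv : vT s.1 = UT ^ (-s.1).toNat := if_neg (by omega)
    have hh : hT s.1 = 1 := if_neg (by omega)
    obtain ⟨a, rfl⟩ := UT_pow_surjective (-s.1).toNat t
    rw [← hv]
    exact single_vT_mem_range s (by rw [hh]; exact ih _ a (by simp; omega))

end Dpos

/-- For every positive `n` and every `i`, the map `D⁺_{n,i} : 𝔸⁺_i → 𝔹⁺_i` is surjective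
(so the homology of its mapping cone is the kernel of `D⁺_{n,i}`). -/
theorem stmt3 (n i : ℤ) (hn : 0 < n) : Function.Surjective (Dpos n i) := by
  intro b
  suffices b ∈ (Dpos n i).range from this
  induction b using DFinsupp.induction with
  | h0 => exact zero_mem _
  | ha s t _ _ _ ih =>
    exact add_mem (single_mem_range_of_neg_le hn s.1.natAbs s t (by omega)) ih
end
end

section
/- Fix g ≥ 1 and let M = Λ*(V) ⊗_ℤ T with the operators U and D_γ (γ ∈ V) described below. For every integer i ≥ 1, the kernel M_i of U^i : M → M equals the smallest additive subgroup of M that contains the element (e₁∧f₁∧⋯∧e_g∧f_g) ⊗ U^{−(i−1)} and is closed under the action of U and of D_γ for every γ ∈ V. In other words, the top summand Λ^{2g}(V) ⊗ U^{−(i−1)} generates M_i as a module over the ring generated by U and the operators D_γ. -/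
noncomputable section

/-- Basis elements of `Λ*(R^{2g}) ⊗ T`: a subset `S ⊆ {1,…,2g}` (the wedge of the
corresponding basis vectors) and `j ∈ ℕ` (the factor `U^{-j}`). -/
abbrev BIdx (g : ℕ) : Type := Finset (Fin (2 * g)) × ℕ

/-- The module `M = Λ*(V) ⊗ T`, with `V` free of rank `2g` over `R`,
modelled as finitely supported families of coefficients on the basis. -/
abbrev MM (R : Type) [CommRing R] (g : ℕ) : Type := BIdx g →₀ R

variable (R : Type) [CommRing R]

/-- The Koszul sign `(-1)^{#{a ∈ S | a < b}}` for inserting/removing `b` in `S`. -/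
def sgnCoef {g : ℕ} (b : Fin (2 * g)) (S : Finset (Fin (2 * g))) : R :=
  (-1) ^ (S.filter fun a => a < b).card

/-- The standard symplectic form on the basis: `ω(e_i, f_i) = 1 = -ω(f_i, e_i)`
(with `e_i` the first `g` basis vectors and `f_i` the last `g`). -/
def omg {g : ℕ} (a b : Fin (2 * g)) : R :=
  if a.1 < g ∧ b.1 = a.1 + g then 1 else if b.1 < g ∧ a.1 = b.1 + g then -1 else 0

/-- The `U`-action on `M = Λ*(V) ⊗ T`, acting on the second factor. -/
def Uop (g : ℕ) : AddMonoid.End (MM R g) :=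
  Finsupp.liftAddHom fun p =>
    if p.2 = 0 then 0 else Finsupp.singleAddHom (p.1, p.2 - 1)

/-- The operator `D_γ(x ⊗ t) = ι_{ω(γ,·)}(x) ⊗ t + (γ ∧ x) ⊗ U·t` for `γ ∈ V`. -/
def Dop (g : ℕ) (γ : Fin (2 * g) → R) : AddMonoid.End (MM R g) :=
  Finsupp.liftAddHom fun p =>
    (∑ b ∈ p.1,
      (Finsupp.singleAddHom (p.1.erase b, p.2)).comp
        (AddMonoidHom.mulLeft (sgnCoef R b p.1 * ∑ a, γ a * omg R a b))) +
    (∑ b : Fin (2 * g),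
      if b ∈ p.1 then 0
      else if p.2 = 0 then 0
      else (Finsupp.singleAddHom (insert b p.1, p.2 - 1)).comp
        (AddMonoidHom.mulLeft (γ b * sgnCoef R b p.1)))

/-- The homogeneous component `M^{(d)}`: the set of elements supported on basis elements
`(S, j)` with `#S + 2j = d`. -/
def homogSet (g : ℕ) (d : ℕ) : Set (MM R g) :=
  {x | ∀ p ∈ x.support, p.1.card + 2 * p.2 = d}

/-! `U` and every `D_γ` commute with `U`, so `ker U^i` is closed under them, and it contains the
generator. Conversely `ker U^i` is spanned by the basis elements `S ⊗ U^{-j}` with `j < i`. A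
subgroup `H` with the closure properties contains `Λ^{2g} ⊗ U^{-j}` by applying `U`, and the
remaining basis elements by downward induction on `S`: for `b ∉ S`, applying `D_γ` with `γ` the
symplectic partner of `b` to `(S ∪ {b}) ⊗ U^{-j}` contracts away exactly `b`, giving
`± S ⊗ U^{-j}` plus wedge terms on strictly larger sets. -/

open Finsupp

variable {R}

theorem Uop_single {g : ℕ} (S : Finset (Fin (2 * g))) (j : ℕ) (r : R) :
    Uop R g (single (S, j) r) = if j = 0 then 0 else single (S, j - 1) r := by
  rw [Uop]; erw [liftAddHom_apply_single]
  split_ifs <;> simp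

theorem Uop_apply {g : ℕ} (x : MM R g) (S : Finset (Fin (2 * g))) (j : ℕ) :
    Uop R g x (S, j) = x (S, j + 1) := by
  induction x using Finsupp.induction_linear with
  | zero => simp
  | add x y hx hy => simp only [map_add, Finsupp.add_apply, hx, hy]
  | single p r =>
    obtain ⟨T, k⟩ := p
    rw [Uop_single]
    rcases k with _ | k <;> simp [single_apply, Prod.ext_iff]

theorem Uop_pow_apply {g : ℕ} (n : ℕ) (x : MM R g) (S : Finset (Fin (2 * g))) (j : ℕ) :
    (Uop R g ^ n) x (S, j) = x (S, j + n) := by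
  induction n generalizing x with
  | zero => rfl
  | succ n ih =>
    rw [pow_succ, AddMonoid.End.coe_mul, Function.comp_apply, ih, Uop_apply]
    rfl

theorem Dop_single {g : ℕ} (γ : Fin (2 * g) → R) (S : Finset (Fin (2 * g))) (j : ℕ) (r : R) :
    Dop R g γ (single (S, j) r) =
      (∑ c ∈ S, single (S.erase c, j) (sgnCoef R c S * (∑ a, γ a * omg R a c) * r)) +
      ∑ c : Fin (2 * g), if c ∈ S then 0 else if j = 0 then 0
        else single (insert c S, j - 1) (γ c * sgnCoef R c S * r) := by
  rw [Dop]; erw [liftAddHom_apply_single]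
  simp only [AddMonoidHom.add_apply, AddMonoidHom.finsetSum_apply]
  congr 1
  refine Finset.sum_congr rfl fun c _ => ?_
  split_ifs <;> rfl

theorem commute_Dop_Uop {g : ℕ} (γ : Fin (2 * g) → R) : Commute (Dop R g γ) (Uop R g) := by
  ext x : 1
  simp only [AddMonoid.End.coe_mul, Function.comp_apply]
  induction x using Finsupp.induction_linear with
  | zero => simp
  | add x y hx hy => simp only [map_add, hx, hy]
  | single p r =>
    obtain ⟨S, j⟩ := p
    rw [Dop_single, Uop_single]
    simp only [map_add, map_sum, apply_ite (Uop R g), map_zero, Uop_single]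
    rcases j with _ | j
    · simp
    · simp [Dop_single]

theorem mem_ker_Uop_pow_iff {g i : ℕ} {x : MM R g} :
    x ∈ AddMonoidHom.ker ((Uop R g ^ i : AddMonoid.End (MM R g)) : MM R g →+ MM R g) ↔
      ∀ p ∈ x.support, p.2 < i := by
  change (Uop R g ^ i) x = 0 ↔ _
  constructor
  · rintro hx ⟨S, j⟩ hp
    by_contra! hij
    have hcoeff := Uop_pow_apply i x S (j - i)
    rw [hx, Nat.sub_add_cancel hij] at hcoeff
    exact mem_support_iff.mp hp hcoeff.symm
  · intro hx
    ext ⟨S, j⟩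
    rw [Uop_pow_apply]
    exact notMem_support_iff.mp fun hp => (hx _ hp).not_ge (Nat.le_add_left i j)

theorem mem_ker_of_commute {M : Type*} [AddGroup M] {f u : AddMonoid.End M}
    (h : Commute f u) {x : M} (hx : x ∈ AddMonoidHom.ker (u : M →+ M)) :
    f x ∈ AddMonoidHom.ker (u : M →+ M) := by
  change u x = 0 at hx
  change (u * f) x = 0
  rw [← h.eq]
  change f (u x) = 0
  rw [hx, map_zero]

def symplecticPartner {g : ℕ} (b : Fin (2 * g)) : Fin (2 * g) :=
  if h : b.1 < g then ⟨b.1 + g, by omega⟩ else ⟨b.1 - g, by have := b.isLt; omega⟩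

theorem omg_symplecticPartner {g : ℕ} (b c : Fin (2 * g)) :
    omg R (symplecticPartner b) c = if c = b then (if b.1 < g then -1 else 1) else 0 := by
  unfold symplecticPartner omg
  split_ifs <;> simp only [Fin.ext_iff] at * <;> omega

theorem sgnCoef_mul_self {g : ℕ} (b : Fin (2 * g)) (S : Finset (Fin (2 * g))) :
    sgnCoef R b S * sgnCoef R b S = 1 := by
  rw [sgnCoef, ← pow_add]
  exact Even.neg_one_pow ⟨_, rfl⟩

theorem single_mem_of_Uop_closed {g : ℕ} {H : AddSubgroup (MM R g)}
    (hU : ∀ x ∈ H, Uop R g x ∈ H) {S : Finset (Fin (2 * g))} {j : ℕ} (n : ℕ) {r : R}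
    (h : single (S, j + n) r ∈ H) : single (S, j) r ∈ H := by
  induction n generalizing j with
  | zero => exact h
  | succ n ih =>
    have hU1 := hU _ (ih (j := j + 1) (by rwa [add_right_comm, add_assoc]))
    rwa [Uop_single, if_neg j.succ_ne_zero, Nat.add_sub_cancel] at hU1

theorem single_mem_of_single_one_mem {g : ℕ} {H : AddSubgroup (MM ℤ g)} {p : BIdx g}
    (h : single p (1 : ℤ) ∈ H) (r : ℤ) : single p r ∈ H := by
  simpa using H.zsmul_mem h r

theorem single_mem_of_insert {g : ℕ} {H : AddSubgroup (MM ℤ g)}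
    (hD : ∀ γ : Fin (2 * g) → ℤ, ∀ x ∈ H, Dop ℤ g γ x ∈ H)
    {S : Finset (Fin (2 * g))} {b : Fin (2 * g)} (hb : b ∉ S) {j : ℕ}
    (hins : single (insert b S, j) (1 : ℤ) ∈ H)
    (hwedge : ∀ c ∉ insert b S, j ≠ 0 →
      single (insert c (insert b S), j - 1) (1 : ℤ) ∈ H) :
    single (S, j) (1 : ℤ) ∈ H := by
  set γ : Fin (2 * g) → ℤ := Pi.single (symplecticPartner b) 1
  set ε : ℤ := sgnCoef ℤ b (insert b S) * if b.1 < g then -1 else 1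
  have hγ : ∀ c, ∑ a, γ a * omg ℤ a c = omg ℤ (symplecticPartner b) c := fun c => by
    rw [Fintype.sum_eq_single (symplecticPartner b) fun a ha => by simp [γ, ha]]
    simp [γ]
  have hcontract : ∑ c ∈ insert b S, single ((insert b S).erase c, j)
      (sgnCoef ℤ c (insert b S) * (∑ a, γ a * omg ℤ a c) * 1) = single (S, j) ε := by
    rw [Finset.sum_eq_single_of_mem b (Finset.mem_insert_self b S)]
    · rw [hγ, omg_symplecticPartner, if_pos rfl, Finset.erase_insert hb, mul_one]
    · intro c _ hcb
      rw [hγ, omg_symplecticPartner, if_neg hcb, mul_zero, zero_mul, single_zero]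
  have hwedge_mem : (∑ c : Fin (2 * g), if c ∈ insert b S then 0 else if j = 0 then 0 else
      single (insert c (insert b S), j - 1) (γ c * sgnCoef ℤ c (insert b S) * 1)) ∈ H := by
    refine H.sum_mem fun c _ => ?_
    split_ifs with hc hj
    · exact H.zero_mem
    · exact H.zero_mem
    · exact single_mem_of_single_one_mem (hwedge c hc hj) _
  have hε : single (S, j) ε ∈ H := by
    have hDins := hD γ _ hins
    rw [Dop_single, hcontract] at hDins
    simpa using H.sub_mem hDins hwedge_mem
  have hεε : ε * ε = 1 := by
    calc ε * ε = (sgnCoef ℤ b (insert b S) * sgnCoef ℤ b (insert b S)) *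
          ((if b.1 < g then -1 else 1) * (if b.1 < g then -1 else 1)) := by ring
      _ = 1 := by rw [sgnCoef_mul_self]; split_ifs <;> norm_num
  simpa [hεε] using H.zsmul_mem hε ε

theorem single_mem_of_lt {g i : ℕ} {H : AddSubgroup (MM ℤ g)}
    (hgen : single (Finset.univ, i - 1) (1 : ℤ) ∈ H) (hU : ∀ x ∈ H, Uop ℤ g x ∈ H)
    (hD : ∀ γ : Fin (2 * g) → ℤ, ∀ x ∈ H, Dop ℤ g γ x ∈ H)
    (S : Finset (Fin (2 * g))) {j : ℕ} (hj : j < i) : single (S, j) (1 : ℤ) ∈ H := by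
  induction S using WellFoundedGT.induction generalizing j with
  | ind S ih =>
    by_cases hS : S = Finset.univ
    · subst hS
      exact single_mem_of_Uop_closed hU (i - 1 - j) (by rwa [Nat.add_sub_cancel' (by omega)])
    · obtain ⟨b, hb⟩ : ∃ b, b ∉ S := by simpa [Finset.eq_univ_iff_forall] using hS
      refine single_mem_of_insert hD hb (ih _ (Finset.ssubset_insert hb) hj) fun c hc _ => ?_
      exact ih _ ((Finset.ssubset_insert hb).trans (Finset.ssubset_insert hc)) (by omega)

theorem stmt12_general (g : ℕ) (i : ℕ) (hi : 1 ≤ i) :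
    AddMonoidHom.ker ((Uop ℤ g ^ i : AddMonoid.End (MM ℤ g)) : MM ℤ g →+ MM ℤ g) =
      sInf {H : AddSubgroup (MM ℤ g) |
        Finsupp.single ((Finset.univ : Finset (Fin (2 * g))), i - 1) (1 : ℤ) ∈ H ∧
        (∀ x ∈ H, Uop ℤ g x ∈ H) ∧
        (∀ (γ : Fin (2 * g) → ℤ), ∀ x ∈ H, Dop ℤ g γ x ∈ H)} := by
  apply le_antisymm
  · refine le_sInf fun H ⟨hgen, hU, hD⟩ x hx => ?_
    rw [← x.sum_single]
    refine AddSubmonoidClass.finsuppSum_mem H x _ fun p hp => ?_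
    exact single_mem_of_single_one_mem
      (single_mem_of_lt hgen hU hD p.1 (mem_ker_Uop_pow_iff.mp hx p (mem_support_iff.mpr hp))) _
  · refine sInf_le ⟨mem_ker_Uop_pow_iff.mpr fun p hp => ?_,
      fun x => mem_ker_of_commute (Commute.self_pow _ i),
      fun γ x => mem_ker_of_commute ((commute_Dop_Uop γ).pow_right i)⟩
    rw [Finset.mem_singleton.mp (support_single_subset hp)]
    omega

/-- For `g ≥ 1` and `i ≥ 1`, the kernel `M_i` of `U^i` on `M = Λ*(ℤ^{2g}) ⊗ T` is the
smallest additive subgroup of `M` containing `(e₁∧f₁∧⋯∧e_g∧f_g) ⊗ U^{−(i−1)}` and closed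
under `U` and under `D_γ` for every `γ ∈ V`. -/
theorem stmt12 (g : ℕ) (hg : 1 ≤ g) (i : ℕ) (hi : 1 ≤ i) :
    AddMonoidHom.ker ((Uop ℤ g ^ i : AddMonoid.End (MM ℤ g)) : MM ℤ g →+ MM ℤ g) =
      sInf {H : AddSubgroup (MM ℤ g) |
        Finsupp.single ((Finset.univ : Finset (Fin (2 * g))), i - 1) (1 : ℤ) ∈ H ∧
        (∀ x ∈ H, Uop ℤ g x ∈ H) ∧
        (∀ (γ : Fin (2 * g) → ℤ), ∀ x ∈ H, Dop ℤ g γ x ∈ H)} :=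
  stmt12_general g i hi
end
end
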